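/- For fixed x > 0, the hypergeometric-type sums S_n(x) = ∑_{k=0}^{⌊n/2⌋-1} ((-4)^k x^{k+1}/(2k+1)!)·((n-2)! (2n-3-2k)!)/((n-2-2k)! (2n-3)!) satisfy lim_{n→∞} S_n(x)/x = sin(√x)/√x. -/

import Mathlib

open Real Filter

/-- The hypergeometric-type sums `S_n(x) = (4n²-1) p_n(x)`, with the Gamma-function ratio
written via falling factorials (terms with `n-2 < 2k` vanish). -/
noncomputable def S (n : ℕ) (x : ℝ) : ℝ :=
  ∑ k ∈ Finset.range (n / 2),
    ((-4 : ℝ)^k * x^(k+1) / ((2*k+1).factorial : ℝ)) *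
      ((Nat.descFactorial (n-2) (2*k) : ℝ) / (Nat.descFactorial (2*n-3) (2*k) : ℝ))

/-!
For fixed `k`, the ratio of falling factorials `(n-2)_{2k} / (2n-3)_{2k}` is a product of `2k`
factors each tending to `1/2`, so the `k`-th term of `S n x` tends to `(-1)^k x^{k+1} / (2k+1)!`,
the `k`-th term of `√x sin √x`. The ratio is at most `1`, so all terms are dominated by
`|x| (4|x|)^k / k!`, and dominated convergence for series gives the limit.
-/

open Finset Topology Nat

noncomputable def STerm (x : ℝ) (n k : ℕ) : ℝ :=
  ((-4 : ℝ)^k * x^(k+1) / ((2*k+1).factorial : ℝ)) *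
      ((Nat.descFactorial (n-2) (2*k) : ℝ) / (Nat.descFactorial (2*n-3) (2*k) : ℝ))

lemma S_eq_tsum_STerm (x : ℝ) {n : ℕ} (hn : 2 ≤ n) : S n x = ∑' k, STerm x n k := by
  refine (tsum_eq_sum fun k hk => ?_).symm
  have hlt : n - 2 < 2 * k := by
    have := Finset.mem_range.not.mp hk
    omega
  simp [Nat.descFactorial_eq_zero_iff_lt.mpr hlt]

lemma descFactorial_div_descFactorial_le_one {m m' : ℕ} (h : m ≤ m') (k : ℕ) :
    (m.descFactorial k : ℝ) / m'.descFactorial k ≤ 1 :=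
  div_le_one_of_le₀ (mod_cast Nat.descFactorial_le k h) (Nat.cast_nonneg _)

lemma cast_descFactorial_eq_prod_range (m k : ℕ) :
    (m.descFactorial k : ℝ) = ∏ j ∈ range k, ((m : ℝ) - j) :=
  (descPochhammer_eval_eq_descFactorial ℝ m k).symm.trans (descPochhammer_eval_eq_prod_range k _)

lemma tendsto_add_div_mul_add (a b : ℝ) {c : ℝ} (hc : c ≠ 0) :
    Tendsto (fun n : ℕ => ((n : ℝ) + a) / (c * n + b)) atTop (𝓝 c⁻¹) := by
  have hnum : Tendsto (fun n : ℕ => 1 + a / (n : ℝ)) atTop (𝓝 1) := by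
    simpa using tendsto_const_nhds.add (tendsto_const_div_atTop_nhds_zero_nat a)
  have hden : Tendsto (fun n : ℕ => c + b / (n : ℝ)) atTop (𝓝 c) := by
    simpa using tendsto_const_nhds.add (tendsto_const_div_atTop_nhds_zero_nat b)
  refine (one_div c ▸ hnum.div hden hc).congr' ?_
  filter_upwards [eventually_ge_atTop 1] with n hn
  have hn0 : (n : ℝ) ≠ 0 := by positivity
  simp only [Pi.div_apply]
  field_simp

lemma tendsto_descFactorial_ratio (k : ℕ) :
    Tendsto (fun n : ℕ =>
      (Nat.descFactorial (n-2) (2*k) : ℝ) / (Nat.descFactorial (2*n-3) (2*k) : ℝ))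
      atTop (𝓝 ((4 : ℝ)⁻¹ ^ k)) := by
  have hprod := tendsto_finsetProd (range (2*k)) fun (j : ℕ) _ =>
    tendsto_add_div_mul_add (-(2 + j)) (-(3 + j)) two_ne_zero
  have hlim : ∏ _j ∈ range (2*k), (2 : ℝ)⁻¹ = (4 : ℝ)⁻¹ ^ k := by
    rw [prod_const, card_range, pow_mul]
    norm_num
  refine hlim ▸ hprod.congr' ?_
  filter_upwards [eventually_ge_atTop 2] with n hn
  rw [cast_descFactorial_eq_prod_range, cast_descFactorial_eq_prod_range, ← prod_div_distrib,
    Nat.cast_sub hn, Nat.cast_sub (by omega)]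
  refine prod_congr rfl fun j _ => ?_
  push_cast
  ring

lemma tendsto_STerm (x : ℝ) (k : ℕ) :
    Tendsto (fun n : ℕ => STerm x n k) atTop
      (𝓝 ((-1 : ℝ)^k * x^(k+1) / ((2*k+1).factorial : ℝ))) := by
  have hlim : (-4 : ℝ)^k * x^(k+1) / ((2*k+1).factorial : ℝ) * (4 : ℝ)⁻¹ ^ k
      = (-1 : ℝ)^k * x^(k+1) / ((2*k+1).factorial : ℝ) := by
    rw [div_mul_eq_mul_div, mul_right_comm, ← mul_pow]
    norm_num
  exact hlim ▸ (tendsto_descFactorial_ratio k).const_mul _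

lemma norm_STerm_le (x : ℝ) (n k : ℕ) : ‖STerm x n k‖ ≤ |x| * (4 * |x|)^k / k ! := by
  have hratio : ‖(Nat.descFactorial (n-2) (2*k) : ℝ) / (Nat.descFactorial (2*n-3) (2*k) : ℝ)‖
      ≤ 1 := by
    rw [Real.norm_of_nonneg (by positivity)]
    exact descFactorial_div_descFactorial_le_one (by omega) _
  calc ‖STerm x n k‖ ≤ ‖(-4 : ℝ)^k * x^(k+1) / ((2*k+1).factorial : ℝ)‖ := by
        rw [STerm, norm_mul]
        exact mul_le_of_le_one_right (norm_nonneg _) hratio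
    _ = |x| * (4 * |x|)^k / (2*k+1) ! := by
        simp only [norm_div, norm_mul, norm_pow, norm_neg, Real.norm_eq_abs, Nat.abs_cast]
        norm_num
        ring
    _ ≤ |x| * (4 * |x|)^k / k ! :=
        div_le_div_of_nonneg_left (by positivity) (by positivity)
          (mod_cast Nat.factorial_le (by omega))

lemma tendsto_S (x : ℝ) :
    Tendsto (fun n : ℕ => S n x) atTop
      (𝓝 (∑' k : ℕ, (-1 : ℝ)^k * x^(k+1) / ((2*k+1).factorial : ℝ))) := by
  have hdom := tendsto_tsum_of_dominated_convergence
    ((Real.summable_pow_div_factorial (4 * |x|)).mul_left |x|) (tendsto_STerm x)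
    (Eventually.of_forall fun n k => (norm_STerm_le x n k).trans_eq (mul_div_assoc ..))
  refine hdom.congr' ?_
  filter_upwards [eventually_ge_atTop 2] with n hn
  exact (S_eq_tsum_STerm x hn).symm

lemma hasSum_sqrt_mul_sin_sqrt {x : ℝ} (hx : 0 ≤ x) :
    HasSum (fun k : ℕ => (-1 : ℝ)^k * x^(k+1) / ((2*k+1).factorial : ℝ)) (√x * sin √x) := by
  refine ((Real.hasSum_sin √x).mul_left √x).congr_fun fun k => ?_
  rw [pow_succ √x, pow_mul, sq_sqrt hx, pow_succ x]
  linear_combination (-1 : ℝ)^k * x^k / ((2*k+1).factorial : ℝ) * (mul_self_sqrt hx).symm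

theorem S_tendsto_sinc (x : ℝ) (hx : 0 < x) :
    Tendsto (fun n : ℕ => S n x / x) atTop
      (nhds (Real.sin (Real.sqrt x) / Real.sqrt x)) := by
  have hsinc : √x * sin √x / x = sin √x / √x := by
    have hsx : √x ≠ 0 := (sqrt_pos.mpr hx).ne'
    rw [div_eq_div_iff hx.ne' hsx]
    linear_combination sin √x * mul_self_sqrt hx.le
  simpa only [(hasSum_sqrt_mul_sin_sqrt hx.le).tsum_eq, hsinc] using (tendsto_S x).div_const x
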